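/- Let x, y ∈ S_{n+1} with x ≤ y, and let L = {z ∈ [x,y] : z^{-1}(0) = x^{-1}(0)}. Then L is a lower order ideal of [x,y] of the form [x, c] for some c ∈ [x,y]; that is, L has a unique maximal element c and L = {z ∈ [x,y] : z ≤ c}. -/

import Mathlib

/-!
By Ehresmann's tableau criterion, `x ≤ y` in Bruhat order iff for all `i, j` the number of
positions `a < i` with `x a ≥ j` is at most the corresponding number for `y`. In these terms
`x ≤ y` forces `x⁻¹ 0 ≤ y⁻¹ 0`, so it suffices to show that for `p ≤ y⁻¹ 0` the set
`{z ≤ y : z⁻¹ 0 = p}` has a greatest element `c` (then `x ≤ c`, and `x ≤ z ≤ c` pins `z⁻¹ 0`).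
This goes by induction on `y⁻¹ 0 - p`. If `q = y⁻¹ 0 > p`, let `s` swap the positions `q - 1`
and `q`, so that `y s < y`. By the lifting property, `w ↦ min(w, ws)` and `w ↦ max(w, ws)` are
monotone; hence if `c'` is greatest for `y s`, then `max(c', c' s)` is greatest for `y`
(or `c'` itself when `p = q - 1`).
-/

open Polynomial

/-- Number of inversions (the Coxeter length) of a permutation of `Fin n`. -/
def invCount {n : ℕ} (x : Equiv.Perm (Fin n)) : ℕ :=
  (Finset.univ.filter (fun p : Fin n × Fin n => p.1 < p.2 ∧ x p.2 < x p.1)).card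

/-- Bruhat order on the symmetric group `S_n = Perm (Fin n)`: `x ≤ y` iff there is an
upward path from `x` to `y` in the Bruhat graph (edges: multiplication by a transposition,
oriented by increasing length). -/
def BruhatLE {n : ℕ} (x y : Equiv.Perm (Fin n)) : Prop :=
  Relation.ReflTransGen
    (fun u v => (∃ i j : Fin n, i ≠ j ∧ v = Equiv.swap i j * u) ∧ invCount u < invCount v)
    x y

def BruhatLT {n : ℕ} (x y : Equiv.Perm (Fin n)) : Prop :=
  BruhatLE x y ∧ x ≠ y

open Equiv Finset

theorem Fintype.sum_eq_add_add_sum_compl_pair {ι M : Type*} [AddCommMonoid M] [Fintype ι]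
    [DecidableEq ι] {a b : ι} (hab : a ≠ b) (f : ι → M) :
    ∑ i, f i = f a + f b + ∑ i ∈ {a, b}ᶜ, f i := by
  rw [← sum_pair hab, sum_add_sum_compl]

section

variable {n : ℕ}

def cornerCount (w : Perm (Fin n)) (i j : ℕ) : ℕ :=
  (univ.filter fun a : Fin n => a.val < i ∧ j ≤ (w a).val).card

def CornerLE (x y : Perm (Fin n)) : Prop :=
  ∀ i j, cornerCount x i j ≤ cornerCount y i j

theorem CornerLE.refl (x : Perm (Fin n)) : CornerLE x x := fun _ _ => le_rfl

theorem CornerLE.trans {x y z : Perm (Fin n)} (hxy : CornerLE x y) (hyz : CornerLE y z) :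
    CornerLE x z := fun i j => (hxy i j).trans (hyz i j)

theorem cornerCount_eq_sum (w : Perm (Fin n)) (i j : ℕ) :
    cornerCount w i j = ∑ a, if a.val < i ∧ j ≤ (w a).val then 1 else 0 :=
  card_filter _ _

theorem cornerCount_succ (w : Perm (Fin n)) (a : Fin n) (j : ℕ) :
    cornerCount w (a.val + 1) j = cornerCount w a.val j + if j ≤ (w a).val then 1 else 0 := by
  have hrest : ∑ b ∈ {a}ᶜ, (if b.val < a.val + 1 ∧ j ≤ (w b).val then 1 else 0) =
      ∑ b ∈ {a}ᶜ, if b.val < a.val ∧ j ≤ (w b).val then 1 else 0 :=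
    sum_congr rfl fun b hb => by
      have : b.val ≠ a.val := fun h => by simp [Fin.ext h] at hb
      split_ifs <;> omega
  rw [cornerCount_eq_sum, cornerCount_eq_sum, Fintype.sum_eq_add_sum_compl a,
    Fintype.sum_eq_add_sum_compl a, hrest]
  simp only [lt_add_one, true_and, lt_irrefl, false_and, if_false]
  ring

theorem cornerCount_eq_add_ite_inv (w : Perm (Fin n)) (i : ℕ) (v : Fin n) :
    cornerCount w i v.val = cornerCount w i (v.val + 1) + if (w⁻¹ v).val < i then 1 else 0 := by
  have hrest : ∑ b ∈ {w⁻¹ v}ᶜ, (if b.val < i ∧ v.val ≤ (w b).val then 1 else 0) =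
      ∑ b ∈ {w⁻¹ v}ᶜ, if b.val < i ∧ v.val + 1 ≤ (w b).val then 1 else 0 :=
    sum_congr rfl fun b hb => by
      have : w b ≠ v := fun h => by simp [← h] at hb
      have : (w b).val ≠ v.val := fun h => this (Fin.ext h)
      split_ifs <;> omega
  rw [cornerCount_eq_sum, cornerCount_eq_sum, Fintype.sum_eq_add_sum_compl (w⁻¹ v),
    Fintype.sum_eq_add_sum_compl (w⁻¹ v), hrest]
  have hv : w (w⁻¹ v) = v := w.apply_symm_apply v
  simp only [hv, le_refl, and_true, Nat.not_succ_le_self, and_false, if_false]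
  ring

theorem cornerCount_zero_right (x y : Perm (Fin n)) (i : ℕ) :
    cornerCount x i 0 = cornerCount y i 0 := by
  simp [cornerCount]

theorem cornerCount_congr {x y : Perm (Fin n)} {i : ℕ} (h : ∀ a : Fin n, a.val < i → x a = y a)
    (j : ℕ) : cornerCount x i j = cornerCount y i j :=
  congrArg card (filter_congr fun a _ => and_congr_right fun ha => by rw [h a ha])

theorem cornerCount_mul_of_forall_lt_iff (w σ : Perm (Fin n)) {i : ℕ}
    (hσ : ∀ a, (σ a).val < i ↔ a.val < i) (j : ℕ) :
    cornerCount (w * σ) i j = cornerCount w i j := by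
  unfold cornerCount
  refine card_equiv σ fun a => ?_
  rw [mem_filter]
  simp only [mem_filter, mem_univ, true_and, Perm.mul_apply, hσ]

theorem cornerCount_add_le_add (w : Perm (Fin n)) {i₁ i₂ j j' : ℕ} (hi : i₁ ≤ i₂)
    (h : ∀ a : Fin n, i₁ ≤ a.val → a.val < i₂ → j ≤ (w a).val → j' ≤ (w a).val) :
    cornerCount w i₂ j + cornerCount w i₁ j' ≤ cornerCount w i₂ j' + cornerCount w i₁ j := by
  simp only [cornerCount_eq_sum, ← sum_add_distrib]
  refine sum_le_sum fun a _ => ?_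
  have := h a
  split_ifs <;> omega

theorem cornerCount_mul_swap (w : Perm (Fin n)) {p q : Fin n} (hpq : p < q) (hw : w p < w q)
    (i j : ℕ) :
    cornerCount (w * swap p q) i j = cornerCount w i j +
      if p.val < i ∧ i ≤ q.val ∧ (w p).val < j ∧ j ≤ (w q).val then 1 else 0 := by
  have hrest : ∑ a ∈ {p, q}ᶜ, (if a.val < i ∧ j ≤ ((w * swap p q) a).val then 1 else 0) =
      ∑ a ∈ {p, q}ᶜ, if a.val < i ∧ j ≤ (w a).val then 1 else 0 :=
    sum_congr rfl fun a ha => by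
      simp only [mem_compl, mem_insert, mem_singleton, not_or] at ha
      rw [Perm.mul_apply, swap_apply_of_ne_of_ne ha.1 ha.2]
  rw [cornerCount_eq_sum, cornerCount_eq_sum, Fintype.sum_eq_add_add_sum_compl_pair hpq.ne,
    Fintype.sum_eq_add_add_sum_compl_pair hpq.ne, hrest]
  simp only [Perm.mul_apply, swap_apply_left, swap_apply_right]
  split_ifs <;> omega

theorem invCount_eq_sum_cornerCount (w : Perm (Fin n)) :
    invCount w = ∑ a, cornerCount w a.val ((w a).val + 1) := by
  rw [invCount, card_filter, Fintype.sum_prod_type, sum_comm]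
  refine sum_congr rfl fun a _ => ?_
  rw [cornerCount_eq_sum]
  refine sum_congr rfl fun b _ => ?_
  dsimp only
  split_ifs <;> omega

theorem invCount_le_card (w : Perm (Fin n)) : invCount w ≤ Fintype.card (Fin n × Fin n) :=
  card_le_univ _

theorem invCount_lt_invCount_mul_swap {w : Perm (Fin n)} {p q : Fin n} (hpq : p < q)
    (hw : w p < w q) : invCount w < invCount (w * swap p q) := by
  have hrest : ∑ a ∈ {p, q}ᶜ, cornerCount w a.val ((w a).val + 1) ≤
      ∑ a ∈ {p, q}ᶜ, cornerCount (w * swap p q) a.val (((w * swap p q) a).val + 1) :=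
    sum_le_sum fun a ha => by
      simp only [mem_compl, mem_insert, mem_singleton, not_or] at ha
      rw [Perm.mul_apply, swap_apply_of_ne_of_ne ha.1 ha.2, cornerCount_mul_swap w hpq hw]
      exact Nat.le_add_right _ _
  have hp := cornerCount_mul_swap w hpq hw p.val ((w q).val + 1)
  have hq := cornerCount_mul_swap w hpq hw q.val ((w p).val + 1)
  have hmonge := cornerCount_add_le_add w (i₁ := p.val) (i₂ := q.val) (j := (w q).val + 1)
    (j' := (w p).val + 1) hpq.le fun a _ _ _ => by omega
  have hwp : (w * swap p q) p = w q := by simp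
  have hwq : (w * swap p q) q = w p := by simp
  rw [invCount_eq_sum_cornerCount, invCount_eq_sum_cornerCount,
    Fintype.sum_eq_add_add_sum_compl_pair hpq.ne, Fintype.sum_eq_add_add_sum_compl_pair hpq.ne,
    hwp, hwq]
  split_ifs at hp hq <;> omega

def BruhatStep (u v : Perm (Fin n)) : Prop :=
  (∃ i j : Fin n, i ≠ j ∧ v = swap i j * u) ∧ invCount u < invCount v

theorem cornerLE_mul_swap_of_invCount_lt {u : Perm (Fin n)} {p q : Fin n} (hpq : p < q)
    (h : invCount u < invCount (u * swap p q)) : CornerLE u (u * swap p q) := by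
  have hu : u p < u q := by
    by_contra! hle
    have hlt : (u * swap p q) p < (u * swap p q) q := by
      simpa using lt_of_le_of_ne hle (u.injective.ne hpq.ne')
    have := invCount_lt_invCount_mul_swap hpq hlt
    rw [mul_swap_mul_self] at this
    omega
  intro i j
  rw [cornerCount_mul_swap u hpq hu]
  exact Nat.le_add_right _ _

theorem BruhatStep.cornerLE {u v : Perm (Fin n)} (h : BruhatStep u v) : CornerLE u v := by
  obtain ⟨⟨i, j, hij, rfl⟩, hinv⟩ := h
  rw [swap_mul_eq_mul_swap] at hinv ⊢
  rcases (u⁻¹.injective.ne hij).lt_or_gt with hlt | hgt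
  · exact cornerLE_mul_swap_of_invCount_lt hlt hinv
  · rw [swap_comm] at hinv ⊢
    exact cornerLE_mul_swap_of_invCount_lt hgt hinv

theorem cornerLE_of_bruhatLE {x y : Perm (Fin n)} (h : BruhatLE x y) : CornerLE x y := by
  induction h with
  | refl => exact CornerLE.refl x
  | tail _ hstep ih => exact ih.trans (BruhatStep.cornerLE hstep)

theorem cornerCount_add_one_le_of_band {x y : Perm (Fin n)} (h : CornerLE x y) {k : Fin n}
    (hagree : ∀ a : Fin n, a.val < k.val → x a = y a) {i j : ℕ}
    (hgap : ∀ a : Fin n, k < a → a.val < i → x k < x a → y k < x a)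
    (hki : k.val < i) (hxj : (x k).val < j) (hjy : j ≤ (y k).val) :
    cornerCount x i j + 1 ≤ cornerCount y i j := by
  have hx := cornerCount_add_le_add x (i₁ := k.val + 1) (i₂ := i) (j := j)
    (j' := (y k).val + 1) hki fun a h₁ h₂ h₃ => by
      have := hgap a (by omega) h₂ (by omega)
      omega
  have hy := cornerCount_add_le_add y (i₁ := k.val + 1) (i₂ := i) (j := (y k).val + 1)
    (j' := j) hki fun a _ _ _ => by omega
  have hle := h i ((y k).val + 1)
  have hxj' := cornerCount_succ x k j
  have hyj' := cornerCount_succ y k j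
  have hxy' := cornerCount_succ x k ((y k).val + 1)
  have hyy' := cornerCount_succ y k ((y k).val + 1)
  have hj := cornerCount_congr hagree j
  have hyk := cornerCount_congr hagree ((y k).val + 1)
  split_ifs at hxj' hyj' hxy' hyy' <;> omega

theorem exists_bruhatStep_of_cornerLE {x y : Perm (Fin n)} (h : CornerLE x y) (hne : x ≠ y) :
    ∃ x', BruhatStep x x' ∧ CornerLE x' y := by
  obtain ⟨a, ha⟩ : ∃ a, x a ≠ y a := not_forall.mp fun hall => hne (Equiv.ext hall)
  obtain ⟨k, hk, hkmin⟩ := wellFounded_lt.has_min {a | x a ≠ y a} ⟨a, ha⟩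
  have hagree : ∀ a : Fin n, a.val < k.val → x a = y a := fun a ha =>
    not_not.mp fun hxa => hkmin a hxa ha
  have hxk : x k < y k := by
    have hrow := h (k.val + 1) (x k).val
    rw [cornerCount_succ, cornerCount_succ, cornerCount_congr hagree] at hrow
    have : x k ≤ y k := by split_ifs at hrow <;> omega
    exact lt_of_le_of_ne this hk
  have hyk : k < x⁻¹ (y k) := by
    have hxa : x (x⁻¹ (y k)) = y k := x.apply_symm_apply _
    refine lt_of_not_ge fun hle => hle.lt_or_eq.elim (fun hlt => ?_) fun heq => hk ?_
    · exact hlt.ne (y.injective ((hagree _ hlt).symm.trans hxa))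
    · rwa [heq] at hxa
  -- Swap `x k` with the first later value in `(x k, y k]`.
  obtain ⟨m, ⟨hkm, hxkm, hxmy⟩, hmmin⟩ := wellFounded_lt.has_min
    {a | k < a ∧ x k < x a ∧ x a ≤ y k} ⟨x⁻¹ (y k), hyk, by simpa using hxk, by simp⟩
  refine ⟨x * swap k m, ⟨⟨x k, x m, x.injective.ne hkm.ne, mul_swap_eq_swap_mul x k m⟩,
    invCount_lt_invCount_mul_swap hkm hxkm⟩, fun i j => ?_⟩
  rw [cornerCount_mul_swap x hkm hxkm]
  split_ifs with hband
  · refine cornerCount_add_one_le_of_band h hagree (fun a hka hai hxa => ?_) hband.1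
      hband.2.2.1 (hband.2.2.2.trans hxmy)
    by_contra! hle
    exact hmmin a ⟨hka, hxa, hle⟩ (by omega)
  · exact h i j

theorem bruhatLE_of_cornerLE {x y : Perm (Fin n)} (h : CornerLE x y) : BruhatLE x y := by
  by_cases hxy : x = y
  · exact hxy ▸ Relation.ReflTransGen.refl
  obtain ⟨x', hstep, hx'y⟩ := exists_bruhatStep_of_cornerLE h hxy
  exact Relation.ReflTransGen.head hstep (bruhatLE_of_cornerLE hx'y)
termination_by Fintype.card (Fin n × Fin n) - invCount x
decreasing_by
  have := hstep.2
  have := invCount_le_card x'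
  omega

theorem bruhatLE_iff_cornerLE {x y : Perm (Fin n)} : BruhatLE x y ↔ CornerLE x y :=
  ⟨cornerLE_of_bruhatLE, bruhatLE_of_cornerLE⟩

theorem CornerLE.inv_zero_le {x y : Perm (Fin (n + 1))} (h : CornerLE x y) : x⁻¹ 0 ≤ y⁻¹ 0 := by
  have hx := cornerCount_eq_add_ite_inv x ((y⁻¹ 0).val + 1) 0
  have hy := cornerCount_eq_add_ite_inv y ((y⁻¹ 0).val + 1) 0
  have h₀ := cornerCount_zero_right x y ((y⁻¹ 0).val + 1)
  have h₁ := h ((y⁻¹ 0).val + 1) 1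
  simp only [Fin.val_zero, zero_add] at hx hy h₀ h₁
  split_ifs at hx hy <;> omega

def adjSwap (a : Fin n) : Perm (Fin (n + 1)) := swap a.castSucc a.succ

section AdjSwap

variable {a : Fin n}

theorem mul_adjSwap_castSucc (w : Perm (Fin (n + 1))) :
    (w * adjSwap a) a.castSucc = w a.succ := by
  simp [adjSwap]

theorem mul_adjSwap_succ (w : Perm (Fin (n + 1))) :
    (w * adjSwap a) a.succ = w a.castSucc := by
  simp [adjSwap]

theorem mul_adjSwap_mul_adjSwap (w : Perm (Fin (n + 1))) :
    w * adjSwap a * adjSwap a = w :=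
  mul_swap_mul_self _ _ w

theorem inv_mul_adjSwap_apply_of_ne (w : Perm (Fin (n + 1))) {v : Fin (n + 1)}
    (h₁ : w⁻¹ v ≠ a.castSucc) (h₂ : w⁻¹ v ≠ a.succ) : (w * adjSwap a)⁻¹ v = w⁻¹ v := by
  rw [mul_inv_rev, Perm.mul_apply, adjSwap, swap_inv, swap_apply_of_ne_of_ne h₁ h₂]

theorem zero_lt_apply_of_apply_eq_zero {w : Perm (Fin (n + 1))} {b c : Fin (n + 1)}
    (hb : w b = 0) (hcb : c ≠ b) : 0 < w c :=
  Fin.pos_iff_ne_zero.mpr fun h0 => hcb (w.injective (h0.trans hb.symm))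

theorem apply_succ_lt_of_not_lt (w : Perm (Fin (n + 1))) (h : ¬ w a.castSucc < w a.succ) :
    w a.succ < w a.castSucc :=
  lt_of_le_of_ne (not_lt.mp h) (w.injective.ne Fin.castSucc_lt_succ.ne')

theorem cornerCount_mul_adjSwap_of_ne (w : Perm (Fin (n + 1))) {i : ℕ} (hi : i ≠ a.val + 1)
    (j : ℕ) : cornerCount (w * adjSwap a) i j = cornerCount w i j := by
  refine cornerCount_mul_of_forall_lt_iff w _ (fun b => ?_) j
  rcases eq_or_ne b a.castSucc with rfl | h₁
  · simp only [adjSwap, swap_apply_left, Fin.val_succ, Fin.val_castSucc]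
    omega
  rcases eq_or_ne b a.succ with rfl | h₂
  · simp only [adjSwap, swap_apply_right, Fin.val_succ, Fin.val_castSucc]
    omega
  rw [adjSwap, swap_apply_of_ne_of_ne h₁ h₂]

theorem cornerCount_mul_adjSwap_succ (w : Perm (Fin (n + 1))) (j : ℕ) :
    cornerCount (w * adjSwap a) (a.val + 1) j =
      cornerCount w a.val j + if j ≤ (w a.succ).val then 1 else 0 := by
  have := cornerCount_succ (w * adjSwap a) a.castSucc j
  rwa [Fin.val_castSucc, cornerCount_mul_adjSwap_of_ne w (i := a.val) (by omega),
    mul_adjSwap_castSucc] at this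

theorem cornerLE_mul_adjSwap {w : Perm (Fin (n + 1))} (hw : w a.castSucc < w a.succ) :
    CornerLE w (w * adjSwap a) := by
  intro i j
  rcases eq_or_ne i (a.val + 1) with rfl | hi
  · have := cornerCount_succ w a.castSucc j
    rw [Fin.val_castSucc] at this
    rw [this, cornerCount_mul_adjSwap_succ]
    split_ifs <;> omega
  · rw [cornerCount_mul_adjSwap_of_ne w hi]

theorem mul_adjSwap_cornerLE {w : Perm (Fin (n + 1))} (hw : w a.succ < w a.castSucc) :
    CornerLE (w * adjSwap a) w := by
  have := cornerLE_mul_adjSwap (w := w * adjSwap a)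
    (by rwa [mul_adjSwap_castSucc, mul_adjSwap_succ])
  rwa [mul_adjSwap_mul_adjSwap] at this

theorem CornerLE.le_mul_adjSwap {u w : Perm (Fin (n + 1))} (h : CornerLE u w)
    (hu : u a.castSucc < u a.succ) : CornerLE u (w * adjSwap a) := by
  intro i j
  rcases eq_or_ne i (a.val + 1) with rfl | hi
  · have hu₁ := cornerCount_succ u a.castSucc j
    have hu₂ := cornerCount_succ u a.succ j
    have hw₁ := cornerCount_succ w a.castSucc j
    have hw₂ := cornerCount_succ w a.succ j
    have h₀ := h a.val j
    have h₂ := h (a.val + 1 + 1) j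
    simp only [Fin.val_castSucc, Fin.val_succ] at hu₁ hu₂ hw₁ hw₂
    rw [cornerCount_mul_adjSwap_succ]
    split_ifs at hu₁ hu₂ hw₁ hw₂ ⊢ <;> omega
  · rw [cornerCount_mul_adjSwap_of_ne w hi]
    exact h i j

theorem CornerLE.mul_adjSwap_le {u w : Perm (Fin (n + 1))} (h : CornerLE u w)
    (hw : w a.succ < w a.castSucc) : CornerLE (u * adjSwap a) w := by
  intro i j
  rcases eq_or_ne i (a.val + 1) with rfl | hi
  · have hu₁ := cornerCount_succ u a.castSucc j
    have hu₂ := cornerCount_succ u a.succ j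
    have hw₁ := cornerCount_succ w a.castSucc j
    have hw₂ := cornerCount_succ w a.succ j
    have h₀ := h a.val j
    have h₂ := h (a.val + 1 + 1) j
    simp only [Fin.val_castSucc, Fin.val_succ] at hu₁ hu₂ hw₁ hw₂
    rw [cornerCount_mul_adjSwap_succ]
    split_ifs at hu₁ hu₂ hw₁ hw₂ ⊢ <;> omega
  · rw [cornerCount_mul_adjSwap_of_ne u hi]
    exact h i j

def lowerAt (a : Fin n) (w : Perm (Fin (n + 1))) : Perm (Fin (n + 1)) :=
  if w a.castSucc < w a.succ then w else w * adjSwap a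

def upperAt (a : Fin n) (w : Perm (Fin (n + 1))) : Perm (Fin (n + 1)) :=
  if w a.castSucc < w a.succ then w * adjSwap a else w

theorem lowerAt_of_descent {w : Perm (Fin (n + 1))} (hw : w a.succ < w a.castSucc) :
    lowerAt a w = w * adjSwap a :=
  if_neg (not_lt.mpr hw.le)

theorem upperAt_mul_adjSwap_of_descent {w : Perm (Fin (n + 1))} (hw : w a.succ < w a.castSucc) :
    upperAt a (w * adjSwap a) = w := by
  rw [upperAt, if_pos (by rwa [mul_adjSwap_castSucc, mul_adjSwap_succ]), mul_adjSwap_mul_adjSwap]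

theorem upperAt_lowerAt (w : Perm (Fin (n + 1))) : upperAt a (lowerAt a w) = upperAt a w := by
  by_cases hw : w a.castSucc < w a.succ
  · rw [lowerAt, if_pos hw]
  · rw [lowerAt_of_descent (apply_succ_lt_of_not_lt w hw), upperAt_mul_adjSwap_of_descent
      (apply_succ_lt_of_not_lt w hw), upperAt, if_neg hw]

theorem cornerLE_upperAt (w : Perm (Fin (n + 1))) : CornerLE w (upperAt a w) := by
  unfold upperAt
  split_ifs with hw
  exacts [cornerLE_mul_adjSwap hw, CornerLE.refl w]

theorem inv_lowerAt_apply_of_ne (w : Perm (Fin (n + 1))) {v : Fin (n + 1)}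
    (h₁ : w⁻¹ v ≠ a.castSucc) (h₂ : w⁻¹ v ≠ a.succ) : (lowerAt a w)⁻¹ v = w⁻¹ v := by
  unfold lowerAt
  split_ifs
  exacts [rfl, inv_mul_adjSwap_apply_of_ne w h₁ h₂]

theorem inv_upperAt_apply_of_ne (w : Perm (Fin (n + 1))) {v : Fin (n + 1)}
    (h₁ : w⁻¹ v ≠ a.castSucc) (h₂ : w⁻¹ v ≠ a.succ) : (upperAt a w)⁻¹ v = w⁻¹ v := by
  unfold upperAt
  split_ifs
  exacts [inv_mul_adjSwap_apply_of_ne w h₁ h₂, rfl]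

theorem CornerLE.lowerAt {u w : Perm (Fin (n + 1))} (h : CornerLE u w) :
    CornerLE (lowerAt a u) (lowerAt a w) := by
  unfold _root_.lowerAt
  split_ifs with hu hw hw
  · exact h
  · exact h.le_mul_adjSwap hu
  · exact (mul_adjSwap_cornerLE (apply_succ_lt_of_not_lt u hu)).trans h
  · exact ((mul_adjSwap_cornerLE (apply_succ_lt_of_not_lt u hu)).trans h).le_mul_adjSwap
      (by rw [mul_adjSwap_castSucc, mul_adjSwap_succ]; exact apply_succ_lt_of_not_lt u hu)

theorem CornerLE.upperAt {u w : Perm (Fin (n + 1))} (h : CornerLE u w) :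
    CornerLE (upperAt a u) (upperAt a w) := by
  unfold _root_.upperAt
  split_ifs with hu hw hw
  · exact (h.trans (cornerLE_mul_adjSwap hw)).mul_adjSwap_le
      (by rwa [mul_adjSwap_castSucc, mul_adjSwap_succ])
  · exact h.mul_adjSwap_le (apply_succ_lt_of_not_lt w hw)
  · exact h.trans (cornerLE_mul_adjSwap hw)
  · exact h

end AdjSwap

def IsGreatestBelowWithZeroAt (y : Perm (Fin (n + 1))) (p : Fin (n + 1))
    (c : Perm (Fin (n + 1))) : Prop :=
  CornerLE c y ∧ c⁻¹ 0 = p ∧ ∀ z, CornerLE z y → z⁻¹ 0 = p → CornerLE z c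

theorem exists_isGreatestBelowWithZeroAt_of_mul_adjSwap {y c' : Perm (Fin (n + 1))}
    {p : Fin (n + 1)} {a : Fin n} (hy : y⁻¹ 0 = a.succ) (hpa : p ≤ a.castSucc)
    (hc' : IsGreatestBelowWithZeroAt (y * adjSwap a) p c') :
    ∃ c, IsGreatestBelowWithZeroAt y p c := by
  obtain ⟨hc'y, hc'0, hc'max⟩ := hc'
  have hya : y a.succ = 0 := (Perm.inv_eq_iff_eq.mp hy).symm
  have hdesc : y a.succ < y a.castSucc :=
    hya ▸ zero_lt_apply_of_apply_eq_zero hya Fin.castSucc_lt_succ.ne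
  rcases hpa.eq_or_lt with rfl | hpa
  · refine ⟨c', hc'y.trans (mul_adjSwap_cornerLE hdesc), hc'0, fun z hz hz0 => hc'max z ?_ hz0⟩
    have hza : z a.castSucc = 0 := (Perm.inv_eq_iff_eq.mp hz0).symm
    exact hz.le_mul_adjSwap (hza ▸ zero_lt_apply_of_apply_eq_zero hza Fin.castSucc_lt_succ.ne')
  · have h₁ : p ≠ a.castSucc := hpa.ne
    have h₂ : p ≠ a.succ := (hpa.trans Fin.castSucc_lt_succ).ne
    refine ⟨upperAt a c', ?_, ?_, fun z hz hz0 => ?_⟩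
    · simpa only [upperAt_mul_adjSwap_of_descent hdesc] using hc'y.upperAt (a := a)
    · rw [inv_upperAt_apply_of_ne c' (by rwa [hc'0]) (by rwa [hc'0]), hc'0]
    · have hlow := hc'max _ (lowerAt_of_descent hdesc ▸ hz.lowerAt)
        (by rw [inv_lowerAt_apply_of_ne z (by rwa [hz0]) (by rwa [hz0]), hz0])
      exact (cornerLE_upperAt z).trans (upperAt_lowerAt z ▸ hlow.upperAt)

theorem exists_isGreatestBelowWithZeroAt {y : Perm (Fin (n + 1))} {p : Fin (n + 1)}
    (hp : p ≤ y⁻¹ 0) : ∃ c, IsGreatestBelowWithZeroAt y p c := by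
  rcases hp.eq_or_lt with hq | hq
  · exact ⟨y, CornerLE.refl y, hq.symm, fun z hz _ => hz⟩
  obtain ⟨a, ha⟩ := Fin.exists_succ_eq.mpr (Fin.pos_iff_ne_zero.mp ((Fin.zero_le p).trans_lt hq))
  have hpa : p ≤ a.castSucc := Fin.le_castSucc_iff.mpr (ha ▸ hq)
  have hy' : (y * adjSwap a)⁻¹ 0 = a.castSucc := by
    rw [mul_inv_rev, Perm.mul_apply, ← ha, adjSwap, swap_inv, swap_apply_right]
  obtain ⟨c', hc'⟩ := exists_isGreatestBelowWithZeroAt (hy' ▸ hpa : p ≤ (y * adjSwap a)⁻¹ 0)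
  exact exists_isGreatestBelowWithZeroAt_of_mul_adjSwap ha.symm hpa hc'
termination_by (y⁻¹ 0).val - p.val
decreasing_by
  have : p.val ≤ a.val := by simpa [Fin.le_def] using hpa
  rw [hy', ← ha, Fin.val_castSucc, Fin.val_succ]
  omega

end

/-- for `x ≤ y` in `S_{n+1}`, the set
`L = {z ∈ [x,y] : z⁻¹(0) = x⁻¹(0)}` is a lower order ideal of `[x, y]` of the form
`[x, c]`: it has a (unique) maximal element `c` and `L = {z ∈ [x,y] : z ≤ c}`. -/
theorem coset_intersection_is_subinterval (n : ℕ) (x y : Equiv.Perm (Fin (n + 1)))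
    (hxy : BruhatLE x y) :
    ∃ c : Equiv.Perm (Fin (n + 1)),
      BruhatLE x c ∧ BruhatLE c y ∧ c⁻¹ 0 = x⁻¹ 0 ∧
      ∀ z : Equiv.Perm (Fin (n + 1)),
        (BruhatLE x z ∧ BruhatLE z y ∧ z⁻¹ 0 = x⁻¹ 0) ↔ (BruhatLE x z ∧ BruhatLE z c) := by
  simp only [bruhatLE_iff_cornerLE] at hxy ⊢
  obtain ⟨c, hcy, hc0, hcmax⟩ := exists_isGreatestBelowWithZeroAt hxy.inv_zero_le
  refine ⟨c, hcmax x hxy rfl, hcy, hc0, fun z => ⟨fun ⟨hxz, hzy, hz0⟩ => ⟨hxz, hcmax z hzy hz0⟩,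
    fun ⟨hxz, hzc⟩ => ⟨hxz, hzc.trans hcy, ?_⟩⟩⟩
  exact le_antisymm (hc0 ▸ hzc.inv_zero_le) hxz.inv_zero_le
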